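/- Comparison principle for the Hamilton-Jacobi system on a graph: Let $\mathcal{G}$ be a directed graph on nodes $\{1,\dots,N\}$ with neighborhoods $\mathcal{V}(i)$, let $m:[0,T] \to \mathcal{P}_N$ be continuous, and for each $i$ let $\mathcal{H}(i,\cdot,m)$ be continuous and nondecreasing in each coordinate of $p \in \mathbb{R}^{\mathcal{V}(i)}$. Suppose $u, v : [0,T] \to \mathbb{R}^N$ are $C^1$ and satisfy, for all $i$ and $t$, $-u'(t,i) - \mathcal{H}(i, (u(t,j)-u(t,i))_{j \in \mathcal{V}(i)}, m(t)) \le 0$ and $-v'(t,i) - \mathcal{H}(i, (v(t,j)-v(t,i))_{j \in \mathcal{V}(i)}, m(t)) \ge 0$, with $u(T,i) \le g(i, m(T)) \le v(T,i)$ for all $i$. Then $u(t,i) \le v(t,i)$ for all $t \in [0,T]$ and all $i$. -/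

import Mathlib

/-!
Let `i₀` maximize `j ↦ u t j - v t j` at some time `t`. Then `u t j - u t i₀ ≤ v t j - v t i₀`
for every `j`, so monotonicity of `H i₀` in `p` gives `H i₀ (Du) ≤ H i₀ (Dv)`, and the two
differential inequalities give `v' t i₀ ≤ u' t i₀`: the maximum of `u - v` cannot decrease forward
in time at an index attaining it. After perturbing `u - v` by `ε (t - T)` this becomes strict, so
the maximum of `u - v` over `[0, T] × {1, …, N}` is attained at time `T`, where `u - v ≤ 0`.
-/

open Set Filter Topology

theorem HasDerivAt.nonpos_of_isMaxOn_Icc {f : ℝ → ℝ} {a b t d : ℝ}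
    (hmax : IsMaxOn f (Icc a b) t) (ht : t ∈ Ico a b) (hf : HasDerivAt f d t) : d ≤ 0 := by
  have hcone : b - t ∈ posTangentConeAt (Icc a b) t :=
    sub_mem_posTangentConeAt_of_segment_subset <| (convex_Icc a b).segment_subset
      (Ico_subset_Icc_self ht) (right_mem_Icc.2 (ht.1.trans ht.2.le))
  have h := hmax.localize.hasFDerivWithinAt_nonpos hf.hasFDerivAt.hasFDerivWithinAt hcone
  rw [ContinuousLinearMap.toSpanSingleton_apply, smul_eq_mul] at h
  exact nonpos_of_mul_nonpos_right h (sub_pos.2 ht.2)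

section FiniteFamily

variable {ι : Type*} [Fintype ι] {a b C : ℝ} {f f' : ι → ℝ → ℝ}

theorem le_of_hasDerivAt_pos_of_isMax
    (hf : ∀ i, ∀ t ∈ Icc a b, HasDerivAt (f i) (f' i t) t)
    (hpos : ∀ t ∈ Ico a b, ∀ i, (∀ j, f j t ≤ f i t) → 0 < f' i t)
    (hb : ∀ i, f i b ≤ C) : ∀ t ∈ Icc a b, ∀ i, f i t ≤ C := by
  intro t ht i
  have hι : (Finset.univ : Finset ι).Nonempty := Finset.univ_nonempty_iff.2 ⟨i⟩
  set M : ℝ → ℝ := fun s => Finset.univ.sup' hι (f · s)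
  have hle_M : ∀ j s, f j s ≤ M s := fun j s => Finset.le_sup' (f · s) (Finset.mem_univ j)
  have hM_cont : ContinuousOn M (Icc a b) :=
    ContinuousOn.finset_sup'_apply hι fun j _ s hs => (hf j s hs).continuousAt.continuousWithinAt
  obtain ⟨t₀, ht₀, hmax⟩ := isCompact_Icc.exists_isMaxOn ⟨t, ht⟩ hM_cont
  obtain ⟨i₀, -, hi₀⟩ := Finset.exists_mem_eq_sup' hι (f · t₀)
  have ht₀b : t₀ = b := by
    by_contra hne
    have ht₀' : t₀ ∈ Ico a b := ⟨ht₀.1, lt_of_le_of_ne ht₀.2 hne⟩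
    have hmax_i₀ : IsMaxOn (f i₀) (Icc a b) t₀ := fun s hs =>
      (hle_M i₀ s).trans ((hmax hs).trans_eq hi₀)
    have hargmax : ∀ j, f j t₀ ≤ f i₀ t₀ := fun j => (hle_M j t₀).trans_eq hi₀
    exact (hpos t₀ ht₀' i₀ hargmax).not_ge
      ((hf i₀ t₀ ht₀).nonpos_of_isMaxOn_Icc hmax_i₀ ht₀')
  calc f i t ≤ M t := hle_M i t
    _ ≤ M b := ht₀b ▸ hmax ht
    _ ≤ C := Finset.sup'_le hι _ fun j _ => hb j

theorem le_of_hasDerivAt_nonneg_of_isMax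
    (hf : ∀ i, ∀ t ∈ Icc a b, HasDerivAt (f i) (f' i t) t)
    (hnonneg : ∀ t ∈ Ico a b, ∀ i, (∀ j, f j t ≤ f i t) → 0 ≤ f' i t)
    (hb : ∀ i, f i b ≤ C) : ∀ t ∈ Icc a b, ∀ i, f i t ≤ C := by
  intro t ht i
  have hperturbed : ∀ ε > 0, f i t ≤ C + ε * (b - t) := fun ε hε => by
    have hshift : ∀ s, HasDerivAt (fun s => ε * (s - b)) ε s := fun s => by
      simpa using ((hasDerivAt_id s).sub_const b).const_mul ε
    have := le_of_hasDerivAt_pos_of_isMax (f := fun j s => f j s + ε * (s - b))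
      (fun j s hs => (hf j s hs).add (hshift s))
      (fun s hs j hj => add_pos_of_nonneg_of_pos (hnonneg s hs j fun k => by simpa using hj k) hε)
      (fun j => by simpa using hb j) t ht i
    linarith
  have hlim : Tendsto (fun ε => C + ε * (b - t)) (𝓝[>] 0) (𝓝 C) :=
    tendsto_nhdsWithin_of_tendsto_nhds (Continuous.tendsto' (by fun_prop) 0 C (by simp))
  exact ge_of_tendsto hlim (eventually_nhdsWithin_of_forall hperturbed)

end FiniteFamily

theorem graph_HJ_comparison_general (N : ℕ) (T : ℝ)
    (V : Fin N → Finset (Fin N))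
    (H : (i : Fin N) → ({j // j ∈ V i} → ℝ) → (Fin N → ℝ) → ℝ)
    (g : Fin N → (Fin N → ℝ) → ℝ)
    (m : ℝ → Fin N → ℝ)
    (hH_mono : ∀ i μ, ∀ p q : {j // j ∈ V i} → ℝ, (∀ j, p j ≤ q j) → H i p μ ≤ H i q μ)
    (u v u' v' : ℝ → Fin N → ℝ)
    (hu : ∀ i, ∀ t ∈ Icc (0 : ℝ) T, HasDerivAt (fun s => u s i) (u' t i) t)
    (hv : ∀ i, ∀ t ∈ Icc (0 : ℝ) T, HasDerivAt (fun s => v s i) (v' t i) t)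
    (hu_sub : ∀ i, ∀ t ∈ Icc (0 : ℝ) T,
      -u' t i - H i (fun j => u t j.1 - u t i) (m t) ≤ 0)
    (hv_super : ∀ i, ∀ t ∈ Icc (0 : ℝ) T,
      0 ≤ -v' t i - H i (fun j => v t j.1 - v t i) (m t))
    (hu_T : ∀ i, u T i ≤ g i (m T))
    (hv_T : ∀ i, g i (m T) ≤ v T i) :
    ∀ t ∈ Icc (0 : ℝ) T, ∀ i, u t i ≤ v t i := by
  intro t ht i
  refine sub_nonpos.1 <| le_of_hasDerivAt_nonneg_of_isMax (f := fun j s => u s j - v s j)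
    (fun j s hs => (hu j s hs).sub (hv j s hs)) ?_ (fun j => by linarith [hu_T j, hv_T j]) t ht i
  intro s hs j hargmax
  have hH : H j (fun k => u s k.1 - u s j) (m s) ≤ H j (fun k => v s k.1 - v s j) (m s) :=
    hH_mono j (m s) _ _ fun k => by linarith [hargmax k.1]
  linarith [hu_sub j s (Ico_subset_Icc_self hs), hv_super j s (Ico_subset_Icc_self hs)]

/-- Comparison principle for the Hamilton-Jacobi system on a directed graph:
a `C¹` subsolution `u` lies below a `C¹` supersolution `v` provided the terminal
conditions are ordered and each Hamiltonian is nondecreasing coordinatewise in `p`. -/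
theorem graph_HJ_comparison (N : ℕ) (T : ℝ) (hT : 0 ≤ T)
    (V : Fin N → Finset (Fin N))
    (H : (i : Fin N) → ({j // j ∈ V i} → ℝ) → (Fin N → ℝ) → ℝ)
    (g : Fin N → (Fin N → ℝ) → ℝ)
    (m : ℝ → Fin N → ℝ)
    (hm_simplex : ∀ t ∈ Icc (0 : ℝ) T, m t ∈ stdSimplex ℝ (Fin N))
    (hm_cont : ContinuousOn m (Icc 0 T))
    (hH_cont : ∀ i, Continuous (fun pm : ({j // j ∈ V i} → ℝ) × (Fin N → ℝ) => H i pm.1 pm.2))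
    (hH_mono : ∀ i μ, ∀ p q : {j // j ∈ V i} → ℝ, (∀ j, p j ≤ q j) → H i p μ ≤ H i q μ)
    (u v u' v' : ℝ → Fin N → ℝ)
    (hu : ∀ i, ∀ t ∈ Icc (0 : ℝ) T, HasDerivAt (fun s => u s i) (u' t i) t)
    (hv : ∀ i, ∀ t ∈ Icc (0 : ℝ) T, HasDerivAt (fun s => v s i) (v' t i) t)
    (hu_sub : ∀ i, ∀ t ∈ Icc (0 : ℝ) T,
      -u' t i - H i (fun j => u t j.1 - u t i) (m t) ≤ 0)
    (hv_super : ∀ i, ∀ t ∈ Icc (0 : ℝ) T,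
      0 ≤ -v' t i - H i (fun j => v t j.1 - v t i) (m t))
    (hu_T : ∀ i, u T i ≤ g i (m T))
    (hv_T : ∀ i, g i (m T) ≤ v T i) :
    ∀ t ∈ Icc (0 : ℝ) T, ∀ i, u t i ≤ v t i :=
  graph_HJ_comparison_general N T V H g m hH_mono u v u' v' hu hv hu_sub hv_super hu_T hv_T
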